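/- Define Q^u_d(y) = Σ_{k=0}^{d} C(d,k) · ∏_{i=0}^{k-1}(i+1-r)(i+r) · ∏_{i=k+1}^{d}(y+d+r-i)(y+u+r+i) and φ_d(y) = ∏_{i=1}^{d}(y+i)(y+i-1+2r). Then Q^0_d(y) = φ_d(y) for all natural numbers d, as polynomials in y and r. -/

import Mathlib

open Finset

/-- The two-variable polynomial ring `ℚ[y, r]`: variable `0` is `y` and variable `1` is `r`. -/
noncomputable abbrev R2 : Type := MvPolynomial (Fin 2) ℚ

noncomputable def r : R2 := MvPolynomial.X 1

/-- `Q u d y = Σ_{k=0}^{d} C(d,k) ∏_{i=0}^{k-1}(i+1-r)(i+r) ∏_{i=k+1}^{d}(y+d+r-i)(y+u+r+i)`,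
as a function of the element `y` (so that substitutions like `y ↦ y+1` are meaningful). -/
noncomputable def Q (u d : ℕ) (y : R2) : R2 :=
  ∑ k ∈ Finset.range (d + 1),
    (d.choose k : R2) * (∏ i ∈ Finset.range k, (((i : R2) + 1 - r) * ((i : R2) + r))) *
      ∏ i ∈ Finset.Icc (k + 1) d,
        ((y + (d : R2) + r - (i : R2)) * (y + (u : R2) + r + (i : R2)))

/-- `φ d y = ∏_{i=1}^{d} (y+i)(y+i-1+2r)`. -/
noncomputable def phi (d : ℕ) (y : R2) : R2 :=
  ∏ i ∈ Finset.Icc 1 d, ((y + (i : R2)) * (y + (i : R2) - 1 + 2 * r))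

/-! With `x = y + r`, `a = 1 - r` and `b = r`, and writing `z^(m)` for the rising factorial,
the claim is the balanced (`a + b = 1`) terminating Pfaff–Saalschütz-type identity
`S_d(x) := ∑ₖ C(d,k) a^(k) b^(k) x^(d-k) (x+k+1)^(d-k) = (x+a)^(d) (x+b)^(d)`.
It follows by induction from `S_{d+1}(x) = (x+a)(x+b) S_d(x+1)`. If `uₖ` is the `k`-th term of
`S_d(x+1)` and `gₖ = (a+k)(b+k) uₖ`, the `(k+1)`-st term of `S_{d+1}(x)` equals
`(x+a)(x+b) u_{k+1} + gₖ - g_{k+1}`, so the `g`'s telescope away; balance enters through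
`(x+a)(x+b) - (a+k+1)(b+k+1) = (x-k-1)(x+k+2)`, which reduces the termwise identity to
Pascal's rule and `(k+1) C(d,k+1) = (d-k) C(d,k)`. -/

open Polynomial

section CommSemiring

variable {A : Type*} [CommSemiring A]

theorem ascPochhammer_eval_eq_prod_range (x : A) (m : ℕ) :
    (ascPochhammer A m).eval x = ∏ i ∈ range m, (x + i) := by
  induction m with
  | zero => simp
  | succ m ih => rw [ascPochhammer_succ_eval, ih, prod_range_succ]

theorem ascPochhammer_succ_eval_left (x : A) (m : ℕ) :
    (ascPochhammer A (m + 1)).eval x = x * (ascPochhammer A m).eval (x + 1) := by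
  rw [ascPochhammer_succ_left, eval_mul, eval_X, eval_comp, eval_add, eval_X, eval_one]

theorem prod_Icc_add_eq_ascPochhammer (x : A) (k d : ℕ) :
    ∏ i ∈ Icc (k + 1) d, (x + i) = (ascPochhammer A (d - k)).eval (x + k + 1) := by
  rw [ascPochhammer_eval_eq_prod_range, ← Ico_add_one_right_eq_Icc, prod_Ico_eq_prod_range,
    Nat.add_sub_add_right]
  refine prod_congr rfl fun i _ => ?_
  push_cast; ring

end CommSemiring

section CommRing

variable {A : Type*} [CommRing A]

theorem prod_Icc_sub_eq_ascPochhammer (x : A) (k d : ℕ) :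
    ∏ i ∈ Icc (k + 1) d, (x + d - i) = (ascPochhammer A (d - k)).eval x := by
  rw [ascPochhammer_eval_eq_prod_range, ← prod_range_reflect, ← Ico_add_one_right_eq_Icc,
    prod_Ico_eq_prod_range, Nat.add_sub_add_right]
  refine prod_congr rfl fun i hi => ?_
  rw [mem_range] at hi
  obtain ⟨j, rfl⟩ : ∃ j, d = k + 1 + i + j := ⟨d - k - 1 - i, by omega⟩
  rw [show k + 1 + i + j - k - 1 - i = j by omega]
  push_cast; ring

namespace Saalschutz

noncomputable def weight (x : A) (d k : ℕ) : A :=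
  d.choose k * ((ascPochhammer A (d - k)).eval x * (ascPochhammer A (d - k)).eval (x + k + 1))

noncomputable def term (a b x : A) (d k : ℕ) : A :=
  (ascPochhammer A k).eval a * (ascPochhammer A k).eval b * weight x d k

noncomputable def series (a b x : A) (d : ℕ) : A :=
  ∑ k ∈ range (d + 1), term a b x d k

theorem weight_succ_zero (x : A) (d : ℕ) :
    weight x (d + 1) 0 = x * (x + 1) * weight (x + 1) d 0 := by
  simp only [weight, Nat.choose_zero_right, Nat.sub_zero, Nat.cast_zero, Nat.cast_one, add_zero,
    ascPochhammer_succ_eval_left, one_mul]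
  ring

theorem weight_succ_succ (x : A) (d k : ℕ) :
    weight x (d + 1) (k + 1) =
      (x - k - 1) * (x + k + 2) * weight (x + 1) d (k + 1) + weight (x + 1) d k := by
  rcases le_or_gt d k with hdk | hkd
  · simp only [weight, Nat.sub_eq_zero_of_le hdk, Nat.sub_eq_zero_of_le (Nat.le_succ_of_le hdk),
      Nat.add_sub_add_right, Nat.choose_succ_succ',
      Nat.choose_eq_zero_of_lt (Nat.lt_succ_of_le hdk),
      ascPochhammer_zero, eval_one]
    push_cast; ring
  obtain ⟨n, rfl⟩ : ∃ n, d = k + n + 1 := ⟨d - k - 1, by omega⟩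
  have hpascal : ((k + n + 1).choose (k + 1) : A) * (k + 1) = (k + n + 1).choose k * (n + 1) := by
    have h := Nat.choose_succ_right_eq (k + n + 1) k
    rw [show k + n + 1 - k = n + 1 by omega] at h
    exact_mod_cast congrArg (Nat.cast : ℕ → A) h
  simp only [weight, Nat.add_sub_add_right, show k + n + 1 - k = n + 1 by omega,
    show k + n + 1 - (k + 1) = n by omega]
  rw [Nat.choose_succ_succ' (k + n + 1), ascPochhammer_succ_eval_left x,
    ascPochhammer_succ_eval _ (x + 1), ascPochhammer_succ_eval_left (x + ↑(k + 1) + 1),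
    ascPochhammer_succ_eval_left (x + 1 + k + 1),
    show x + 1 + ↑(k + 1) + 1 = x + ↑(k + 1) + 1 + 1 by ring,
    show x + 1 + (k : A) + 1 = x + ↑(k + 1) + 1 by push_cast; ring]
  set P := (ascPochhammer A n).eval (x + 1)
  set R := (ascPochhammer A n).eval (x + ↑(k + 1) + 1 + 1)
  push_cast
  linear_combination (P * R * (x + k + 2)) * hpascal

theorem term_succ_succ (a b x : A) (d k : ℕ) :
    term a b x (d + 1) (k + 1) = (x - k - 1) * (x + k + 2) * term a b (x + 1) d (k + 1)
      + (a + k) * (b + k) * term a b (x + 1) d k := by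
  simp only [term, weight_succ_succ, ascPochhammer_succ_eval]
  ring

theorem series_succ {a b : A} (hab : a + b = 1) (x : A) (d : ℕ) :
    series a b x (d + 1) = (x + a) * (x + b) * series a b (x + 1) d := by
  set u := term a b (x + 1) d
  set g := fun k : ℕ => (a + k) * (b + k) * u k
  have hu : u (d + 1) = 0 := by simp [u, term, weight]
  have hcert : ∀ k, term a b x (d + 1) (k + 1) =
      (x + a) * (x + b) * u (k + 1) + (g k - g (k + 1)) := by
    intro k
    rw [term_succ_succ]
    simp only [g]; push_cast
    linear_combination ((k + 1 - x) * u (k + 1)) * hab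
  have hshift := sum_range_succ' u (d + 1)
  rw [sum_range_succ, hu, add_zero] at hshift
  rw [series, series, sum_range_succ', sum_congr rfl fun k _ => hcert k, sum_add_distrib,
    ← mul_sum, sum_range_sub', term, weight_succ_zero]
  have hu0 : u 0 = weight (x + 1) d 0 := by simp [u, term]
  change _ = (x + a) * (x + b) * ∑ k ∈ range (d + 1), u k
  simp only [g, hu, ← hu0, hshift, ascPochhammer_zero, eval_one, Nat.cast_zero, add_zero]
  linear_combination (-x * u 0) * hab

theorem series_eq_ascPochhammer_mul {a b : A} (hab : a + b = 1) (x : A) (d : ℕ) :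
    series a b x d = (ascPochhammer A d).eval (x + a) * (ascPochhammer A d).eval (x + b) := by
  induction d generalizing x with
  | zero => simp [series, term, weight]
  | succ d ih =>
    rw [series_succ hab, ih, ascPochhammer_succ_eval_left (x + a),
      ascPochhammer_succ_eval_left (x + b), add_right_comm x 1 a, add_right_comm x 1 b]
    ring

end Saalschutz

end CommRing

theorem Q_zero_eq_series (d : ℕ) (y : R2) : Q 0 d y = Saalschutz.series (1 - r) r (y + r) d := by
  refine sum_congr rfl fun k _ => ?_
  have hc : ∏ i ∈ range k, (((i : R2) + 1 - r) * ((i : R2) + r)) =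
      (ascPochhammer R2 k).eval (1 - r) * (ascPochhammer R2 k).eval r := by
    rw [ascPochhammer_eval_eq_prod_range, ascPochhammer_eval_eq_prod_range, ← prod_mul_distrib]
    exact prod_congr rfl fun i _ => by ring
  have hw : ∏ i ∈ Icc (k + 1) d,
        ((y + (d : R2) + r - (i : R2)) * (y + ((0 : ℕ) : R2) + r + (i : R2))) =
      (ascPochhammer R2 (d - k)).eval (y + r) *
        (ascPochhammer R2 (d - k)).eval (y + r + k + 1) := by
    rw [← prod_Icc_sub_eq_ascPochhammer, ← prod_Icc_add_eq_ascPochhammer, ← prod_mul_distrib]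
    exact prod_congr rfl fun i _ => by push_cast; ring
  rw [Saalschutz.term, Saalschutz.weight, hc, hw]
  ring

theorem phi_eq_ascPochhammer_mul (d : ℕ) (y : R2) :
    phi d y =
      (ascPochhammer R2 d).eval (y + r + (1 - r)) * (ascPochhammer R2 d).eval (y + r + r) := by
  have h₁ := prod_Icc_add_eq_ascPochhammer y 0 d
  have h₂ := prod_Icc_add_eq_ascPochhammer (y - 1 + 2 * r) 0 d
  simp only [zero_add, Nat.cast_zero, add_zero, Nat.sub_zero] at h₁ h₂
  rw [show y + r + (1 - r) = y + 1 by ring, show y + r + r = y - 1 + 2 * r + 1 by ring,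
    ← h₁, ← h₂, phi, ← prod_mul_distrib]
  exact prod_congr rfl fun i _ => by ring

theorem stmt8 (d : ℕ) : Q 0 d (MvPolynomial.X 0) = phi d (MvPolynomial.X 0) := by
  rw [Q_zero_eq_series, phi_eq_ascPochhammer_mul,
    Saalschutz.series_eq_ascPochhammer_mul (sub_add_cancel 1 r)]
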